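/- arXiv:2604.21583 — 5 statements merged into one kernel-verified Lean document; each statement's English description precedes it below -/
import Mathlib

section
/- Let 3/2 < β ≤ 2. For t > 0 and x ∈ ℝ² define the periodized heat kernel p_t(x) := ∑_{n ∈ ℤ²} (4πt)^{-1} exp(−|x + 2πn|²/(4t)) (a sum of nonnegative terms). Then there exists a constant v* > 0 such that for every x ∈ ℝ², ∫_0^∞ t^{β/2−1} e^{−t} p_t(x) dt ≥ v*, where the integral is interpreted as a Lebesgue integral of a nonnegative function with values in [0,∞]. -/
open MeasureTheory
open scoped ENNReal

/-- Squared Euclidean norm on `ℝ × ℝ`. -/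
noncomputable def rsq (x : ℝ × ℝ) : ℝ := x.1 ^ 2 + x.2 ^ 2

/-- The periodized heat kernel on the torus `[0,2π]²`, as a sum in `ℝ≥0∞`
of the nonnegative Gaussian terms. -/
noncomputable def heatK (t : ℝ) (x : ℝ × ℝ) : ℝ≥0∞ :=
  ∑' n : ℤ × ℤ,
    ENNReal.ofReal ((4 * Real.pi * t)⁻¹ *
      Real.exp (-(rsq (x.1 + 2 * Real.pi * (n.1 : ℝ), x.2 + 2 * Real.pi * (n.2 : ℝ)) / (4 * t))))

lemma round_sq_le (y : ℝ) :
    (y + 2 * Real.pi * ((-round (y / (2 * Real.pi)) : ℤ) : ℝ)) ^ 2 ≤ Real.pi ^ 2 := by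
  have hπ : (0 : ℝ) < 2 * Real.pi := by positivity
  have h1 : |y / (2 * Real.pi) - round (y / (2 * Real.pi))| ≤ 1 / 2 := abs_sub_round _
  have h2 : |y + 2 * Real.pi * ((-round (y / (2 * Real.pi)) : ℤ) : ℝ)| ≤ Real.pi := by
    have : y + 2 * Real.pi * ((-round (y / (2 * Real.pi)) : ℤ) : ℝ)
        = 2 * Real.pi * (y / (2 * Real.pi) - round (y / (2 * Real.pi))) := by
      push_cast
      field_simp
      ring
    rw [this, abs_mul, abs_of_pos hπ]
    calc 2 * Real.pi * |y / (2 * Real.pi) - round (y / (2 * Real.pi))|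
        ≤ 2 * Real.pi * (1 / 2) := by
          exact mul_le_mul_of_nonneg_left h1 (le_of_lt hπ)
      _ = Real.pi := by ring
  calc (y + 2 * Real.pi * ((-round (y / (2 * Real.pi)) : ℤ) : ℝ)) ^ 2
      = |y + 2 * Real.pi * ((-round (y / (2 * Real.pi)) : ℤ) : ℝ)| ^ 2 := (sq_abs _).symm
    _ ≤ Real.pi ^ 2 := by
        apply pow_le_pow_left₀ (abs_nonneg _) h2

lemma heatK_lower (t : ℝ) (ht1 : 1 ≤ t) (ht2 : t ≤ 2) (x : ℝ × ℝ) :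
    ENNReal.ofReal ((8 * Real.pi)⁻¹ * Real.exp (-(Real.pi ^ 2 / 2))) ≤ heatK t x := by
  have ht0 : (0 : ℝ) < t := lt_of_lt_of_le one_pos ht1
  set n : ℤ × ℤ := (-round (x.1 / (2 * Real.pi)), -round (x.2 / (2 * Real.pi)))
  have key : ENNReal.ofReal ((8 * Real.pi)⁻¹ * Real.exp (-(Real.pi ^ 2 / 2))) ≤
      ENNReal.ofReal ((4 * Real.pi * t)⁻¹ *
        Real.exp (-(rsq (x.1 + 2 * Real.pi * (n.1 : ℝ), x.2 + 2 * Real.pi * (n.2 : ℝ)) / (4 * t)))) := by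
    apply ENNReal.ofReal_le_ofReal
    have hr : rsq (x.1 + 2 * Real.pi * (n.1 : ℝ), x.2 + 2 * Real.pi * (n.2 : ℝ))
        ≤ 2 * Real.pi ^ 2 := by
      have h1 := round_sq_le x.1
      have h2 := round_sq_le x.2
      simp only [rsq, n]
      linarith
    have hrn : 0 ≤ rsq (x.1 + 2 * Real.pi * (n.1 : ℝ), x.2 + 2 * Real.pi * (n.2 : ℝ)) := by
      simp only [rsq]; positivity
    have hdiv : rsq (x.1 + 2 * Real.pi * (n.1 : ℝ), x.2 + 2 * Real.pi * (n.2 : ℝ)) / (4 * t)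
        ≤ Real.pi ^ 2 / 2 := by
      have h4t : (4 : ℝ) ≤ 4 * t := by linarith
      calc rsq (x.1 + 2 * Real.pi * (n.1 : ℝ), x.2 + 2 * Real.pi * (n.2 : ℝ)) / (4 * t)
          ≤ (2 * Real.pi ^ 2) / (4 * t) := by
            apply div_le_div_of_nonneg_right hr ?_ |>.trans_eq rfl
            · positivity
        _ ≤ (2 * Real.pi ^ 2) / 4 := by
            apply div_le_div_of_nonneg_left (by positivity) (by norm_num) h4t
        _ = Real.pi ^ 2 / 2 := by ring
    have hexp : Real.exp (-(Real.pi ^ 2 / 2)) ≤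
        Real.exp (-(rsq (x.1 + 2 * Real.pi * (n.1 : ℝ), x.2 + 2 * Real.pi * (n.2 : ℝ)) / (4 * t))) := by
      apply Real.exp_le_exp.2
      linarith
    have hinv : (8 * Real.pi)⁻¹ ≤ (4 * Real.pi * t)⁻¹ := by
      apply inv_anti₀ (by positivity)
      nlinarith [Real.pi_pos]
    calc (8 * Real.pi)⁻¹ * Real.exp (-(Real.pi ^ 2 / 2))
        ≤ (4 * Real.pi * t)⁻¹ * Real.exp (-(Real.pi ^ 2 / 2)) := by
          exact mul_le_mul_of_nonneg_right hinv (Real.exp_pos _).le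
      _ ≤ _ := by
          exact mul_le_mul_of_nonneg_left hexp (by positivity)
  exact key.trans (ENNReal.le_tsum n)

/-- Uniform positive lower bound for the subordinated heat-kernel representation of the
periodic fractional Bessel kernel, for `3/2 < β ≤ 2`. -/
theorem periodic_fractional_bessel_lower_bound
    (β : ℝ) (hβ1 : 3 / 2 < β) (hβ2 : β ≤ 2) :
    ∃ vstar : ℝ, 0 < vstar ∧
      ∀ x : ℝ × ℝ,
        ENNReal.ofReal vstar ≤
          ∫⁻ t in Set.Ioi (0 : ℝ),
            ENNReal.ofReal (t ^ (β / 2 - 1) * Real.exp (-t)) * heatK t x := by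
  refine ⟨2⁻¹ * Real.exp (-2) * ((8 * Real.pi)⁻¹ * Real.exp (-(Real.pi ^ 2 / 2))),
    by positivity, fun x => ?_⟩
  have hsub : Set.Ioc (1 : ℝ) 2 ⊆ Set.Ioi (0 : ℝ) := fun t ht => lt_trans one_pos ht.1
  calc ENNReal.ofReal (2⁻¹ * Real.exp (-2) * ((8 * Real.pi)⁻¹ * Real.exp (-(Real.pi ^ 2 / 2))))
      = ENNReal.ofReal (2⁻¹ * Real.exp (-2)) *
        ENNReal.ofReal ((8 * Real.pi)⁻¹ * Real.exp (-(Real.pi ^ 2 / 2))) := by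
        rw [ENNReal.ofReal_mul (by positivity)]
    _ = ∫⁻ _ in Set.Ioc (1 : ℝ) 2, (ENNReal.ofReal (2⁻¹ * Real.exp (-2)) *
        ENNReal.ofReal ((8 * Real.pi)⁻¹ * Real.exp (-(Real.pi ^ 2 / 2)))) := by
        rw [lintegral_const, Measure.restrict_apply MeasurableSet.univ, Set.univ_inter,
          Real.volume_Ioc]
        norm_num
    _ ≤ ∫⁻ t in Set.Ioc (1 : ℝ) 2,
          ENNReal.ofReal (t ^ (β / 2 - 1) * Real.exp (-t)) * heatK t x := by
        apply setLIntegral_mono' measurableSet_Ioc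
        intro t ht
        have ht1 : (1 : ℝ) ≤ t := le_of_lt ht.1
        have ht2 : t ≤ 2 := ht.2
        have ht0 : (0 : ℝ) < t := lt_of_lt_of_le one_pos ht1
        have h1 : (2 : ℝ)⁻¹ ≤ t ^ (β / 2 - 1) := by
          have he : (-1 : ℝ) ≤ β / 2 - 1 := by linarith
          have he0 : β / 2 - 1 ≤ 0 := by linarith
          calc (2 : ℝ)⁻¹ = (2 : ℝ) ^ (-1 : ℝ) := by
                rw [Real.rpow_neg_one]
            _ ≤ (2 : ℝ) ^ (β / 2 - 1) := by
                exact Real.rpow_le_rpow_of_exponent_le one_le_two he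
            _ ≤ t ^ (β / 2 - 1) := by
                exact Real.rpow_le_rpow_of_nonpos ht0 ht2 he0
        have h2 : Real.exp (-2) ≤ Real.exp (-t) := Real.exp_le_exp.2 (by linarith)
        have hof : ENNReal.ofReal (2⁻¹ * Real.exp (-2)) ≤
            ENNReal.ofReal (t ^ (β / 2 - 1) * Real.exp (-t)) := by
          apply ENNReal.ofReal_le_ofReal
          calc 2⁻¹ * Real.exp (-2) ≤ t ^ (β / 2 - 1) * Real.exp (-2) :=
                mul_le_mul_of_nonneg_right h1 (Real.exp_pos _).le
            _ ≤ t ^ (β / 2 - 1) * Real.exp (-t) :=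
                mul_le_mul_of_nonneg_left h2 (Real.rpow_nonneg ht0.le _)
        exact mul_le_mul' hof (heatK_lower t ht1 ht2 x)
    _ ≤ ∫⁻ t in Set.Ioi (0 : ℝ),
          ENNReal.ofReal (t ^ (β / 2 - 1) * Real.exp (-t)) * heatK t x :=
        lintegral_mono_set hsub
end

section
/- Let d ≥ 1 be an integer and let l, m be real numbers with 0 < l < d, 0 < m < d and l + m > d. Then there exists a constant C > 0 such that for every k ∈ ℤ^d, ∑_{k₁ ∈ ℤ^d} ⟨k₁⟩^{−l} ⟨k − k₁⟩^{−m} ≤ C ⟨k⟩^{−(l+m−d)}. -/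
open scoped ENNReal

/-- Squared Euclidean norm on `ℤ^d`. -/
noncomputable def znsq {d : ℕ} (p : Fin d → ℤ) : ℝ := ∑ i, ((p i : ℝ)) ^ 2

/-! Write `K = ⟨k⟩`. Since `K ≤ ⟨k₁⟩ + ⟨k - k₁⟩`, the larger of the two brackets is at least
`K / 2`. Where the smaller one is at most `K`, the other factor is at most `(K / 2)^{-m}` and what
remains is the sum of `⟨p⟩^{-l}` over a ball of radius `K`, which is `O(K^{d-l})` because `l < d`.
Where the smaller one exceeds `K`, the summand is at most `⟨p⟩^{-(l+m)}`, whose sum over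
`⟨p⟩ ≥ K` is `O(K^{d-l-m})` because `l + m > d`. Both lattice sums are estimated shell by shell
over the dyadic shells `2^j ≤ ⟨p⟩ < 2^{j+1}`, each containing at most `5^d 2^{jd}` points. -/

section Bracket

variable {E : Type*} [SeminormedAddCommGroup E]

noncomputable def jbracket (x : E) : ℝ := √(1 + ‖x‖ ^ 2)

lemma one_le_jbracket (x : E) : 1 ≤ jbracket x :=
  Real.one_le_sqrt.mpr (by nlinarith [sq_nonneg ‖x‖])

lemma jbracket_pos (x : E) : 0 < jbracket x := one_pos.trans_le (one_le_jbracket x)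

lemma sq_jbracket (x : E) : jbracket x ^ 2 = 1 + ‖x‖ ^ 2 :=
  Real.sq_sqrt (by positivity)

lemma norm_le_jbracket (x : E) : ‖x‖ ≤ jbracket x :=
  Real.le_sqrt_of_sq_le (by linarith)

lemma jbracket_add_le (x y : E) : jbracket (x + y) ≤ jbracket x + jbracket y := by
  refine Real.sqrt_le_iff.mpr ⟨by linarith [jbracket_pos x, jbracket_pos y], ?_⟩
  nlinarith [norm_add_le x y, norm_nonneg (x + y), norm_le_jbracket x, norm_le_jbracket y,
    sq_jbracket x, sq_jbracket y, norm_nonneg x, norm_nonneg y]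

lemma jbracket_le_add_jbracket_sub (x y : E) : jbracket x ≤ jbracket y + jbracket (x - y) := by
  simpa using jbracket_add_le y (x - y)

lemma jbracket_rpow_neg (x : E) (t : ℝ) : jbracket x ^ (-t) = (1 + ‖x‖ ^ 2) ^ (-(t / 2)) := by
  rw [jbracket, Real.sqrt_eq_rpow, ← Real.rpow_mul (by positivity)]
  ring_nf

end Bracket

def latticeToEuclidean {d : ℕ} : (Fin d → ℤ) →+ EuclideanSpace ℝ (Fin d) :=
  AddMonoidHom.mk' (fun p => WithLp.toLp 2 fun i => (p i : ℝ)) fun p q => by ext; simp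

lemma norm_latticeToEuclidean_sq {d : ℕ} (p : Fin d → ℤ) : ‖latticeToEuclidean p‖ ^ 2 = znsq p := by
  simp [EuclideanSpace.real_norm_sq_eq, znsq, latticeToEuclidean]

lemma abs_le_norm_latticeToEuclidean {d : ℕ} (p : Fin d → ℤ) (i : Fin d) :
    |(p i : ℝ)| ≤ ‖latticeToEuclidean p‖ := by
  simpa [latticeToEuclidean] using PiLp.norm_apply_le (latticeToEuclidean p) i

local notation "⟪" p "⟫" => jbracket (latticeToEuclidean p)

noncomputable def dyadicScale (x : ℝ) : ℕ := Nat.log 2 ⌊x⌋₊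

lemma two_pow_dyadicScale_le {x : ℝ} (hx : 1 ≤ x) : (2 : ℝ) ^ dyadicScale x ≤ x := by
  have hfloor : 1 ≤ ⌊x⌋₊ := Nat.le_floor (by exact_mod_cast hx)
  calc (2 : ℝ) ^ dyadicScale x = ((2 ^ dyadicScale x : ℕ) : ℝ) := by push_cast; rfl
    _ ≤ ⌊x⌋₊ := by exact_mod_cast Nat.pow_log_le_self 2 (by omega)
    _ ≤ x := Nat.floor_le (by linarith)

lemma lt_two_pow_dyadicScale_succ (x : ℝ) : x < 2 ^ (dyadicScale x + 1) :=
  calc x < ⌊x⌋₊ + 1 := Nat.lt_floor_add_one x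
    _ ≤ ((2 ^ (dyadicScale x + 1) : ℕ) : ℝ) := by
      exact_mod_cast Nat.lt_pow_succ_log_self (by norm_num) _
    _ = 2 ^ (dyadicScale x + 1) := by push_cast; rfl

lemma dyadicScale_mono : Monotone dyadicScale :=
  fun _ _ h => Nat.log_mono_right (Nat.floor_mono h)

noncomputable def box (d N : ℕ) : Finset (Fin d → ℤ) :=
  Fintype.piFinset fun _ => Finset.Icc (-(N : ℤ)) N

lemma card_box (d N : ℕ) : (box d N).card = (2 * N + 1) ^ d := by
  have : (Finset.Icc (-(N : ℤ)) N).card = 2 * N + 1 := by rw [Int.card_Icc]; omega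
  simp [box, Fintype.card_piFinset, this]

lemma mem_box_of_jbracket_le {d N : ℕ} {p : Fin d → ℤ} (h : ⟪p⟫ ≤ N) : p ∈ box d N := by
  refine Fintype.mem_piFinset.mpr fun i => Finset.mem_Icc.mpr (abs_le.mp ?_)
  have : |(p i : ℝ)| ≤ N :=
    (abs_le_norm_latticeToEuclidean p i).trans ((norm_le_jbracket _).trans h)
  exact_mod_cast this

lemma tsum_shell_le {d : ℕ} {s : ℝ} (hs : 0 ≤ s) (j : ℕ) :
    ∑' p : Fin d → ℤ, (if dyadicScale ⟪p⟫ = j then ENNReal.ofReal (⟪p⟫ ^ (-s)) else 0) ≤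
      ENNReal.ofReal (5 ^ d * ((2 : ℝ) ^ j) ^ ((d : ℝ) - s)) := by
  set N := 2 ^ (j + 1)
  set c := ((2 : ℝ) ^ j) ^ (-s)
  have hpointwise (p : Fin d → ℤ) :
      (if dyadicScale ⟪p⟫ = j then ENNReal.ofReal (⟪p⟫ ^ (-s)) else 0) ≤
        if p ∈ box d N then ENNReal.ofReal c else 0 := by
    split_ifs with hj hbox
    · refine ENNReal.ofReal_le_ofReal (Real.rpow_le_rpow_of_nonpos (by positivity) ?_ (by linarith))
      exact hj ▸ two_pow_dyadicScale_le (one_le_jbracket _)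
    · refine absurd (mem_box_of_jbracket_le ?_) hbox
      have := hj ▸ lt_two_pow_dyadicScale_succ ⟪p⟫
      push_cast [N]
      exact this.le
    · exact zero_le
    · exact le_rfl
  have hcard : ((box d N).card : ℝ) ≤ (5 * 2 ^ j) ^ d := by
    rw [card_box]
    push_cast [N]
    gcongr
    rw [pow_succ]
    linarith [one_le_pow₀ (M₀ := ℝ) (a := 2) (by norm_num) (n := j)]
  calc _ ≤ ∑' p : Fin d → ℤ, if p ∈ box d N then ENNReal.ofReal c else 0 :=
        ENNReal.tsum_le_tsum hpointwise
    _ = ENNReal.ofReal ((box d N).card * c) := by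
        rw [tsum_eq_sum fun p hp => if_neg hp, Finset.sum_ite_of_true fun _ h => h,
          Finset.sum_const, nsmul_eq_mul, ENNReal.ofReal_mul (by positivity),
          ENNReal.ofReal_natCast]
    _ ≤ ENNReal.ofReal (5 ^ d * ((2 : ℝ) ^ j) ^ ((d : ℝ) - s)) := by
        refine ENNReal.ofReal_le_ofReal
          ((mul_le_mul_of_nonneg_right hcard (by positivity)).trans_eq ?_)
        rw [mul_pow, mul_assoc, ← Real.rpow_natCast ((2 : ℝ) ^ j) d,
          ← Real.rpow_add (by positivity), sub_eq_add_neg]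

lemma two_pow_rpow_comm (n : ℕ) (t : ℝ) : ((2 : ℝ) ^ n) ^ t = ((2 : ℝ) ^ t) ^ n :=
  (Real.rpow_pow_comm zero_le_two t n).symm

lemma sum_range_two_pow_rpow_le {t : ℝ} (ht : 0 < t) (J : ℕ) :
    ∑ j ∈ Finset.range (J + 1), ((2 : ℝ) ^ j) ^ t ≤ 2 ^ t / (2 ^ t - 1) * ((2 : ℝ) ^ J) ^ t := by
  have hq : 1 < (2 : ℝ) ^ t := Real.one_lt_rpow (by norm_num) ht
  simp_rw [two_pow_rpow_comm]
  rw [geom_sum_eq hq.ne']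
  calc ((2 ^ t) ^ (J + 1) - 1) / (2 ^ t - 1) ≤ ((2 : ℝ) ^ t) ^ (J + 1) / (2 ^ t - 1) := by
        gcongr
        linarith
    _ = 2 ^ t / (2 ^ t - 1) * ((2 : ℝ) ^ t) ^ J := by ring

lemma hasSum_two_pow_add_rpow {t : ℝ} (ht : t < 0) (J : ℕ) :
    HasSum (fun i : ℕ => ((2 : ℝ) ^ (J + i)) ^ t) (((2 : ℝ) ^ J) ^ t * (1 - 2 ^ t)⁻¹) := by
  have hq : (2 : ℝ) ^ t < 1 := Real.rpow_lt_one_of_one_lt_of_neg (by norm_num) ht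
  have := (hasSum_geometric_of_lt_one (by positivity) hq).mul_left (((2 : ℝ) ^ J) ^ t)
  refine this.congr_fun fun i => ?_
  rw [pow_add, Real.mul_rpow (by positivity) (by positivity), two_pow_rpow_comm i]

lemma exists_tsum_ball_le {d : ℕ} {s : ℝ} (hs0 : 0 ≤ s) (hsd : s < d) :
    ∃ C, 0 < C ∧ ∀ R, 1 ≤ R → ∑' p : Fin d → ℤ,
      (if ⟪p⟫ ≤ R then ENNReal.ofReal (⟪p⟫ ^ (-s)) else 0) ≤
        ENNReal.ofReal (C * R ^ ((d : ℝ) - s)) := by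
  have hq : 1 < (2 : ℝ) ^ ((d : ℝ) - s) := Real.one_lt_rpow (by norm_num) (by linarith)
  refine ⟨5 ^ d * (2 ^ ((d : ℝ) - s) / (2 ^ ((d : ℝ) - s) - 1)),
    by have := sub_pos.mpr hq; positivity, fun R hR => ?_⟩
  set J := dyadicScale R
  set shell : ℕ → (Fin d → ℤ) → ℝ≥0∞ := fun j p =>
    if dyadicScale ⟪p⟫ = j then ENNReal.ofReal (⟪p⟫ ^ (-s)) else 0
  have hpointwise (p : Fin d → ℤ) : (if ⟪p⟫ ≤ R then ENNReal.ofReal (⟪p⟫ ^ (-s)) else 0) ≤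
      ∑ j ∈ Finset.range (J + 1), shell j p := by
    split_ifs with hR
    · refine le_of_eq_of_le (if_pos rfl).symm (Finset.single_le_sum (f := (shell · p))
        (fun _ _ => zero_le) (Finset.mem_range_succ_iff.mpr (dyadicScale_mono hR)))
    · exact zero_le
  calc _ ≤ ∑' p, ∑ j ∈ Finset.range (J + 1), shell j p := ENNReal.tsum_le_tsum hpointwise
    _ = ∑ j ∈ Finset.range (J + 1), ∑' p, shell j p :=
        Summable.tsum_finsetSum fun _ _ => ENNReal.summable
    _ ≤ ∑ j ∈ Finset.range (J + 1), ENNReal.ofReal (5 ^ d * ((2 : ℝ) ^ j) ^ ((d : ℝ) - s)) :=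
        Finset.sum_le_sum fun j _ => tsum_shell_le hs0 j
    _ = ENNReal.ofReal (5 ^ d * ∑ j ∈ Finset.range (J + 1), ((2 : ℝ) ^ j) ^ ((d : ℝ) - s)) := by
        rw [Finset.mul_sum, ENNReal.ofReal_sum_of_nonneg fun _ _ => by positivity]
    _ ≤ _ := by
        refine ENNReal.ofReal_le_ofReal ?_
        rw [mul_assoc]
        gcongr
        refine (sum_range_two_pow_rpow_le (by linarith) J).trans ?_
        gcongr
        exact two_pow_dyadicScale_le hR

lemma exists_tsum_tail_le {d : ℕ} {s : ℝ} (hsd : d < s) :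
    ∃ C, 0 < C ∧ ∀ R, 0 < R → ∑' p : Fin d → ℤ,
      (if R ≤ ⟪p⟫ then ENNReal.ofReal (⟪p⟫ ^ (-s)) else 0) ≤
        ENNReal.ofReal (C * R ^ ((d : ℝ) - s)) := by
  have hq : (2 : ℝ) ^ ((d : ℝ) - s) < 1 :=
    Real.rpow_lt_one_of_one_lt_of_neg (by norm_num) (by linarith)
  refine ⟨5 ^ d * (1 - 2 ^ ((d : ℝ) - s))⁻¹ * 2 ^ (s - d),
    by have := sub_pos.mpr hq; positivity, fun R hR => ?_⟩
  set J := dyadicScale R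
  set shell : ℕ → (Fin d → ℤ) → ℝ≥0∞ := fun j p =>
    if dyadicScale ⟪p⟫ = j then ENNReal.ofReal (⟪p⟫ ^ (-s)) else 0
  have hpointwise (p : Fin d → ℤ) : (if R ≤ ⟪p⟫ then ENNReal.ofReal (⟪p⟫ ^ (-s)) else 0) ≤
      ∑' i, shell (J + i) p := by
    split_ifs with hR
    · have hJ : dyadicScale ⟪p⟫ = J + (dyadicScale ⟪p⟫ - J) := by
        have := dyadicScale_mono hR
        omega
      exact le_of_eq_of_le (if_pos hJ).symm (ENNReal.le_tsum (f := fun i => shell (J + i) p) _)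
    · exact zero_le
  have hgeom := hasSum_two_pow_add_rpow (sub_neg.mpr hsd) J
  calc _ ≤ ∑' p, ∑' i, shell (J + i) p := ENNReal.tsum_le_tsum hpointwise
    _ = ∑' i, ∑' p, shell (J + i) p := ENNReal.tsum_comm
    _ ≤ ∑' i, ENNReal.ofReal (5 ^ d * ((2 : ℝ) ^ (J + i)) ^ ((d : ℝ) - s)) :=
        ENNReal.tsum_le_tsum fun i => tsum_shell_le ((Nat.cast_nonneg d).trans hsd.le) (J + i)
    _ = ENNReal.ofReal (5 ^ d * (((2 : ℝ) ^ J) ^ ((d : ℝ) - s) * (1 - 2 ^ ((d : ℝ) - s))⁻¹)) := by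
        rw [← (hgeom.mul_left _).tsum_eq,
          ENNReal.ofReal_tsum_of_nonneg (fun _ => by positivity) (hgeom.mul_left _).summable]
    _ ≤ _ := by
        refine ENNReal.ofReal_le_ofReal ?_
        have hR2 : ((2 : ℝ) ^ J) ^ ((d : ℝ) - s) ≤ 2 ^ (s - d) * R ^ ((d : ℝ) - s) := by
          have : R / 2 ≤ 2 ^ J := by
            have := lt_two_pow_dyadicScale_succ R
            rw [pow_succ] at this
            linarith
          calc ((2 : ℝ) ^ J) ^ ((d : ℝ) - s) ≤ (R / 2) ^ ((d : ℝ) - s) :=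
                Real.rpow_le_rpow_of_nonpos (by positivity) this (by linarith)
            _ = 2 ^ (s - d) * R ^ ((d : ℝ) - s) := by
                rw [Real.div_rpow hR.le zero_le_two, div_eq_mul_inv, ← Real.rpow_neg zero_le_two,
                  neg_sub, mul_comm]
        have := sub_pos.mpr hq
        calc 5 ^ d * (((2 : ℝ) ^ J) ^ ((d : ℝ) - s) * (1 - 2 ^ ((d : ℝ) - s))⁻¹)
            ≤ 5 ^ d * (2 ^ (s - d) * R ^ ((d : ℝ) - s) * (1 - 2 ^ ((d : ℝ) - s))⁻¹) := by gcongr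
          _ = _ := by ring

-- Bounds `a^{-l} b^{-m}` on the half `a ≤ b` of the region `K ≤ a + b`, where `b ≥ K / 2`.
noncomputable def convMajorant (l m K a : ℝ) : ℝ :=
  (K / 2) ^ (-m) * (if a ≤ K then a ^ (-l) else 0) + if K ≤ a then a ^ (-(l + m)) else 0

lemma convMajorant_nonneg {l m K a : ℝ} (hK : 0 < K) (ha : 0 < a) : 0 ≤ convMajorant l m K a := by
  unfold convMajorant
  split_ifs <;> positivity

lemma rpow_neg_mul_rpow_neg_le_convMajorant {l m K a b : ℝ} (hm : 0 ≤ m) (hK : 0 < K)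
    (ha : 0 < a) (hab : a ≤ b) (hK_le : K ≤ a + b) :
    a ^ (-l) * b ^ (-m) ≤ convMajorant l m K a := by
  unfold convMajorant
  by_cases haK : a ≤ K
  · have hb : b ^ (-m) ≤ (K / 2) ^ (-m) :=
      Real.rpow_le_rpow_of_nonpos (by positivity) (by linarith) (by linarith)
    rw [if_pos haK, mul_comm]
    have := mul_le_mul_of_nonneg_right hb (Real.rpow_nonneg ha.le (-l))
    split_ifs <;> linarith [Real.rpow_nonneg ha.le (-(l + m))]
  · have hb : b ^ (-m) ≤ a ^ (-m) := Real.rpow_le_rpow_of_nonpos ha hab (by linarith)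
    rw [if_neg haK, if_pos (by linarith), mul_zero, zero_add, neg_add, Real.rpow_add ha]
    exact mul_le_mul_of_nonneg_left hb (Real.rpow_nonneg ha.le _)

lemma rpow_neg_mul_rpow_neg_le_convMajorant_add {l m K a b : ℝ} (hl : 0 ≤ l) (hm : 0 ≤ m)
    (hK : 0 < K) (ha : 0 < a) (hb : 0 < b) (hK_le : K ≤ a + b) :
    a ^ (-l) * b ^ (-m) ≤ convMajorant l m K a + convMajorant m l K b := by
  rcases le_total a b with hab | hba
  · exact (rpow_neg_mul_rpow_neg_le_convMajorant hm hK ha hab hK_le).trans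
      (le_add_of_nonneg_right (convMajorant_nonneg hK hb))
  · rw [mul_comm]
    exact (rpow_neg_mul_rpow_neg_le_convMajorant hl hK hb hba (by linarith)).trans
      (le_add_of_nonneg_left (convMajorant_nonneg hK ha))

lemma exists_tsum_convMajorant_le {d : ℕ} {l m : ℝ} (hl : 0 ≤ l) (hld : l < d)
    (hlm : d < l + m) :
    ∃ C, 0 < C ∧ ∀ K, 1 ≤ K → ∑' p : Fin d → ℤ, ENNReal.ofReal (convMajorant l m K ⟪p⟫) ≤
      ENNReal.ofReal (C * K ^ ((d : ℝ) - (l + m))) := by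
  obtain ⟨B, hB, hball⟩ := exists_tsum_ball_le (d := d) hl hld
  obtain ⟨T, hT, htail⟩ := exists_tsum_tail_le (d := d) hlm
  refine ⟨2 ^ m * B + T, by positivity, fun K hK => ?_⟩
  have hK0 : 0 < K := by linarith
  calc _ ≤ ∑' p : Fin d → ℤ, (ENNReal.ofReal ((K / 2) ^ (-m)) *
        (if ⟪p⟫ ≤ K then ENNReal.ofReal (⟪p⟫ ^ (-l)) else 0) +
        if K ≤ ⟪p⟫ then ENNReal.ofReal (⟪p⟫ ^ (-(l + m))) else 0) := by
        refine ENNReal.tsum_le_tsum fun p => ENNReal.ofReal_add_le.trans_eq ?_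
        rw [ENNReal.ofReal_mul (by positivity)]
        split_ifs <;> simp
    _ = ENNReal.ofReal ((K / 2) ^ (-m)) *
          ∑' p : Fin d → ℤ, (if ⟪p⟫ ≤ K then ENNReal.ofReal (⟪p⟫ ^ (-l)) else 0) +
        ∑' p : Fin d → ℤ, if K ≤ ⟪p⟫ then ENNReal.ofReal (⟪p⟫ ^ (-(l + m))) else 0 := by
        rw [ENNReal.tsum_add, ENNReal.tsum_mul_left]
    _ ≤ ENNReal.ofReal ((K / 2) ^ (-m)) * ENNReal.ofReal (B * K ^ ((d : ℝ) - l)) +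
        ENNReal.ofReal (T * K ^ ((d : ℝ) - (l + m))) := by
        gcongr
        · exact hball K hK
        · exact htail K hK0
    _ = _ := by
        rw [← ENNReal.ofReal_mul (by positivity), ← ENNReal.ofReal_add (by positivity)
          (by positivity)]
        congr 1
        rw [Real.div_rpow hK0.le zero_le_two, Real.rpow_neg zero_le_two, div_eq_mul_inv, inv_inv,
          show (d : ℝ) - (l + m) = -m + (d - l) by ring, Real.rpow_add hK0]
        ring

lemma rpow_neg_half_one_add_znsq {d : ℕ} (p : Fin d → ℤ) (t : ℝ) :
    (1 + znsq p) ^ (-(t / 2)) = ⟪p⟫ ^ (-t) := by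
  rw [jbracket_rpow_neg, norm_latticeToEuclidean_sq]

theorem japanese_bracket_convolution_general
    (d : ℕ) (l m : ℝ)
    (hl0 : 0 < l) (hld : l < d) (hm0 : 0 < m) (hmd : m < d) (hlm : (d : ℝ) < l + m) :
    ∃ C : ℝ, 0 < C ∧ ∀ k : Fin d → ℤ,
      ∑' k₁ : Fin d → ℤ,
        ENNReal.ofReal
          ((1 + znsq k₁) ^ (-(l / 2)) * (1 + znsq (k - k₁)) ^ (-(m / 2))) ≤
      ENNReal.ofReal (C * (1 + znsq k) ^ (-((l + m - d) / 2))) := by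
  obtain ⟨C₁, hC₁, h₁⟩ := exists_tsum_convMajorant_le hl0.le hld hlm
  obtain ⟨C₂, hC₂, h₂⟩ := exists_tsum_convMajorant_le hm0.le hmd (add_comm l m ▸ hlm)
  refine ⟨C₁ + C₂, add_pos hC₁ hC₂, fun k => ?_⟩
  set K := ⟪k⟫
  have hK : 1 ≤ K := one_le_jbracket _
  have hsplit (k₁ : Fin d → ℤ) : K ≤ ⟪k₁⟫ + ⟪k - k₁⟫ := by
    simpa using jbracket_le_add_jbracket_sub (latticeToEuclidean k) (latticeToEuclidean k₁)
  simp only [rpow_neg_half_one_add_znsq]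
  calc _ ≤ ∑' k₁ : Fin d → ℤ, (ENNReal.ofReal (convMajorant l m K (⟪k₁⟫)) +
        ENNReal.ofReal (convMajorant m l K (⟪k - k₁⟫))) :=
        ENNReal.tsum_le_tsum fun k₁ => (ENNReal.ofReal_le_ofReal
          (rpow_neg_mul_rpow_neg_le_convMajorant_add hl0.le hm0.le (by linarith)
            (jbracket_pos _) (jbracket_pos _) (hsplit k₁))).trans ENNReal.ofReal_add_le
    _ = ∑' k₁ : Fin d → ℤ, ENNReal.ofReal (convMajorant l m K (⟪k₁⟫)) +
        ∑' k₁ : Fin d → ℤ, ENNReal.ofReal (convMajorant m l K (⟪k₁⟫)) := by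
        rw [ENNReal.tsum_add]
        congr 1
        exact (Equiv.subLeft k).tsum_eq fun q => ENNReal.ofReal (convMajorant m l K ⟪q⟫)
    _ ≤ ENNReal.ofReal (C₁ * K ^ ((d : ℝ) - (l + m))) +
          ENNReal.ofReal (C₂ * K ^ ((d : ℝ) - (m + l))) :=
        add_le_add (h₁ K hK) (h₂ K hK)
    _ = _ := by
        rw [← ENNReal.ofReal_add (by positivity) (by positivity), add_comm m l, ← add_mul,
          show (d : ℝ) - (l + m) = -(l + m - d) by ring]

/-- Convolution bound for Japanese brackets on `ℤ^d`:
for `0 < l < d`, `0 < m < d`, `l + m > d`, one has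
`∑_{k₁} ⟨k₁⟩^{-l} ⟨k-k₁⟩^{-m} ≤ C ⟨k⟩^{-(l+m-d)}`. -/
theorem japanese_bracket_convolution
    (d : ℕ) (hd : 1 ≤ d) (l m : ℝ)
    (hl0 : 0 < l) (hld : l < d) (hm0 : 0 < m) (hmd : m < d) (hlm : (d : ℝ) < l + m) :
    ∃ C : ℝ, 0 < C ∧ ∀ k : Fin d → ℤ,
      ∑' k₁ : Fin d → ℤ,
        ENNReal.ofReal
          ((1 + znsq k₁) ^ (-(l / 2)) * (1 + znsq (k - k₁)) ^ (-(m / 2))) ≤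
      ENNReal.ofReal (C * (1 + znsq k) ^ (-((l + m - d) / 2))) :=
  japanese_bracket_convolution_general d l m hl0 hld hm0 hmd hlm
end

section
/- There exist constants c > 0 and C > 0 such that for every λ ∈ (0,1] and every real Λ₁ ≥ 1, λ · ∑_{p ∈ ℤ², 1+|p|² > Λ₁²} 1/(exp(λ(1+|p|²)) − 1) ≤ C · log(1/(1 − exp(−c λ Λ₁²))). -/
open scoped ENNReal

/-- Squared Euclidean norm on `ℤ²`. -/
noncomputable def nsq (p : ℤ × ℤ) : ℝ := (p.1 : ℝ) ^ 2 + (p.2 : ℝ) ^ 2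

/-!
Since `1/(e^X - 1) ≤ e^(-X/2)/X`, a point with `(k+1)Λ₁² ≤ h(p) < (k+2)Λ₁²` contributes at most
`M k = x^(k+1)/((k+1)Λ₁²)` to `λ ∑ 1/(e^(λh(p)) - 1)`, where `x = e^(-λΛ₁²/2)`. Lattice points in
the annuli `k = const` are not uniformly bounded by `Λ₁²`, but those in discs are:
`#{|p|² ≤ R} ≤ 9R`. Summing by parts, `∑_p M (k p) = ∑_i #{k ≤ i} (M i - M (i+1))` with
`#{k ≤ i} ≤ 9(i+2)Λ₁²`, and `(i+2)Λ₁² (M i - M (i+1)) = x^(i+1)/(i+1) + x^(i+1) - x^(i+2)`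
sums to `-log(1-x) + x ≤ 2 log(1/(1-x))`. Hence `c = 1/2` and `C = 18`.
-/

open Real Filter Topology

lemma mul_exp_half_le_exp_sub_one {X : ℝ} (hX : 0 ≤ X) : X * exp (X / 2) ≤ exp X - 1 := by
  have hsinh : X / 2 ≤ sinh (X / 2) := self_le_sinh_iff.2 (by linarith)
  have hsq : exp (X / 2) * exp (X / 2) = exp X := by rw [← exp_add, add_halves]
  have hinv : exp (X / 2) * exp (-(X / 2)) = 1 := by rw [← exp_add, add_neg_cancel, exp_zero]
  rw [sinh_eq] at hsinh
  nlinarith [exp_pos (X / 2)]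

lemma hasSum_sub_succ_of_antitone {f : ℕ → ℝ} (hf : Antitone f) (h0 : Tendsto f atTop (𝓝 0))
    (n : ℕ) : HasSum (fun i => f (n + i) - f (n + i + 1)) (f n) := by
  rw [hasSum_iff_tendsto_nat_of_nonneg fun i => sub_nonneg.2 (hf (Nat.le_succ _))]
  have hpartial : ∀ N, ∑ i ∈ Finset.range N, (f (n + i) - f (n + i + 1)) = f n - f (n + N) :=
    fun N => by simpa [add_assoc] using Finset.sum_range_sub' (fun i => f (n + i)) N
  have hshift : Tendsto (fun N => f (n + N)) atTop (𝓝 0) := by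
    simpa [add_comm] using (tendsto_add_atTop_iff_nat n).2 h0
  simp only [hpartial]
  simpa using tendsto_const_nhds.sub hshift

namespace ENNReal

lemma ofReal_eq_tsum_ite_sub_succ {f : ℕ → ℝ} (hf : Antitone f) (h0 : Tendsto f atTop (𝓝 0))
    (n : ℕ) :
    ENNReal.ofReal (f n) = ∑' i, if n ≤ i then ENNReal.ofReal (f i - f (i + 1)) else 0 := by
  have hsum := hasSum_sub_succ_of_antitone hf h0 n
  rw [← hsum.tsum_eq, ENNReal.ofReal_tsum_of_nonneg
    (fun i => sub_nonneg.2 (hf (Nat.le_succ _))) hsum.summable]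
  refine (add_right_injective n).tsum_eq (f := fun i =>
    if n ≤ i then ENNReal.ofReal (f i - f (i + 1)) else 0) ?_ |>.symm.trans ?_ |>.symm
  · intro i hi
    have : n ≤ i := by by_contra h; simp [h] at hi
    exact ⟨i - n, show n + (i - n) = i by omega⟩
  · simp

theorem tsum_ofReal_comp_eq_tsum_encard_mul {α : Type*} (j : α → ℕ) {f : ℕ → ℝ}
    (hf : Antitone f) (h0 : Tendsto f atTop (𝓝 0)) :
    ∑' a, ENNReal.ofReal (f (j a)) =
      ∑' i, ({a | j a ≤ i}.encard : ℝ≥0∞) * ENNReal.ofReal (f i - f (i + 1)) := by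
  simp_rw [ofReal_eq_tsum_ite_sub_succ hf h0]
  rw [ENNReal.tsum_comm]
  refine tsum_congr fun i => ?_
  rw [← ENNReal.tsum_set_const, tsum_subtype _ fun _ => ENNReal.ofReal (f i - f (i + 1))]
  simp only [Set.indicator_apply, Set.mem_ofPred_eq]

end ENNReal

lemma mem_Icc_floor_sqrt_of_sq_le {R : ℝ} {n : ℤ} (h : (n : ℝ) ^ 2 ≤ R) :
    n ∈ Finset.Icc (-(⌊√R⌋₊ : ℤ)) ⌊√R⌋₊ := by
  have hlt : |(n : ℝ)| < ⌊√R⌋₊ + 1 := (abs_le_sqrt h).trans_lt (Nat.lt_floor_add_one _)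
  have hlt' : |n| < ⌊√R⌋₊ + 1 := by exact_mod_cast hlt
  rw [Finset.mem_Icc]
  constructor <;> linarith [neg_abs_le n, le_abs_self n]

lemma encard_setOf_nsq_le {R : ℝ} (hR : 1 ≤ R) :
    ({p : ℤ × ℤ | nsq p ≤ R}.encard : ℝ≥0∞) ≤ ENNReal.ofReal (9 * R) := by
  set N := ⌊√R⌋₊
  have hsub : {p : ℤ × ℤ | nsq p ≤ R} ⊆
      ↑(Finset.Icc (-(N : ℤ)) N ×ˢ Finset.Icc (-(N : ℤ)) N) := by
    intro p hp
    simp only [Set.mem_ofPred_eq, nsq] at hp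
    simp only [Finset.coe_product, Set.mem_prod, Finset.mem_coe]
    exact ⟨mem_Icc_floor_sqrt_of_sq_le (by nlinarith), mem_Icc_floor_sqrt_of_sq_le (by nlinarith)⟩
  have hN1 : 1 ≤ N := Nat.one_le_floor_iff _ |>.2 (one_le_sqrt.2 hR)
  have hNR : (N : ℝ) ≤ √R := Nat.floor_le (sqrt_nonneg R)
  have hcard : (Finset.Icc (-(N : ℤ)) N ×ˢ Finset.Icc (-(N : ℤ)) N).card = (2 * N + 1) ^ 2 := by
    rw [Finset.card_product, Int.card_Icc, sq]
    congr 2 <;> omega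
  calc ({p : ℤ × ℤ | nsq p ≤ R}.encard : ℝ≥0∞)
      ≤ ((2 * N + 1) ^ 2 : ℕ) := by
        have h := Set.encard_le_encard hsub
        rw [Set.encard_coe_eq_coe_finsetCard, hcard] at h
        exact_mod_cast h
    _ ≤ ENNReal.ofReal (9 * R) := by
        rw [← ENNReal.ofReal_natCast]
        refine ENNReal.ofReal_le_ofReal ?_
        have hN1' : (1 : ℝ) ≤ N := by exact_mod_cast hN1
        push_cast
        nlinarith [sq_sqrt (by linarith : (0 : ℝ) ≤ R)]

noncomputable def shellIndex (c : ℝ) (p : ℤ × ℤ) : ℕ := ⌊(1 + nsq p) / c⌋₊ - 1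

lemma shellIndex_bounds {c : ℝ} (hc : 0 < c) {p : ℤ × ℤ} (hp : c < 1 + nsq p) :
    (shellIndex c p + 1) * c ≤ 1 + nsq p ∧ 1 + nsq p < (shellIndex c p + 2) * c := by
  have hy : 1 ≤ (1 + nsq p) / c := (one_le_div hc).2 hp.le
  have hfloor : ((shellIndex c p : ℕ) : ℝ) + 1 = ⌊(1 + nsq p) / c⌋₊ := by
    rw [shellIndex, Nat.cast_sub (Nat.one_le_floor_iff _ |>.2 hy), Nat.cast_one, sub_add_cancel]
  constructor
  · rw [hfloor, ← le_div_iff₀ hc]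
    exact Nat.floor_le (by linarith)
  · rw [show ((shellIndex c p : ℕ) : ℝ) + 2 = ⌊(1 + nsq p) / c⌋₊ + 1 by linarith,
      ← div_lt_iff₀ hc]
    exact Nat.lt_floor_add_one _

lemma encard_setOf_shellIndex_le {c : ℝ} (hc : 1 ≤ c) (i : ℕ) :
    ({a : {p : ℤ × ℤ // c < 1 + nsq p} | shellIndex c a.1 ≤ i}.encard : ℝ≥0∞) ≤
      ENNReal.ofReal (9 * ((i + 2) * c)) := by
  have hsub : Subtype.val '' {a : {p : ℤ × ℤ // c < 1 + nsq p} | shellIndex c a.1 ≤ i} ⊆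
      {p | nsq p ≤ (i + 2) * c} := by
    rintro _ ⟨a, ha, rfl⟩
    have hi : (shellIndex c a.1 : ℝ) ≤ i := by exact_mod_cast ha
    have := (shellIndex_bounds (by linarith) a.2).2
    simp only [Set.mem_ofPred_eq]
    nlinarith
  rw [← Subtype.val_injective.injOn.encard_image]
  exact (ENat.toENNReal_le.2 (Set.encard_le_encard hsub)).trans
    (encard_setOf_nsq_le (by nlinarith))

noncomputable def shellBound (x c : ℝ) (n : ℕ) : ℝ := x ^ (n + 1) / ((n + 1) * c)

lemma antitone_shellBound {x c : ℝ} (hx0 : 0 ≤ x) (hx1 : x ≤ 1) (hc : 0 < c) :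
    Antitone (shellBound x c) := by
  refine antitone_nat_of_succ_le fun n => ?_
  unfold shellBound
  push_cast
  exact div_le_div₀ (by positivity) (pow_le_pow_of_le_one hx0 hx1 (n + 1).le_succ)
    (by positivity) (by gcongr; linarith)

lemma tendsto_shellBound {x : ℝ} (hx0 : 0 ≤ x) (hx1 : x < 1) (c : ℝ) :
    Tendsto (shellBound x c) atTop (𝓝 0) := by
  have hpow := (tendsto_pow_atTop_nhds_zero_of_lt_one hx0 hx1).comp (tendsto_add_atTop_nat 1)
  have hinv := (tendsto_one_div_add_atTop_nhds_zero_nat).div_const c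
  convert hpow.mul hinv using 2 with n
  · simp only [shellBound, Function.comp_apply, div_div, mul_one_div]
  · simp

lemma mul_one_div_exp_sub_one_le_shellBound {lam c h : ℝ} (hlam : 0 < lam) (hc : 0 < c)
    {k : ℕ} (hk : (k + 1) * c ≤ h) :
    lam * (1 / (exp (lam * h) - 1)) ≤ shellBound (exp (-(1 / 2 * lam * c))) c k := by
  have hkc : 0 < (k + 1) * c := by positivity
  have hh : 0 < h := hkc.trans_le hk
  have hexp : exp (-(lam * h / 2)) ≤ exp (-(1 / 2 * lam * c)) ^ (k + 1) := by
    rw [← exp_nat_mul, exp_le_exp]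
    push_cast
    nlinarith
  calc lam * (1 / (exp (lam * h) - 1))
      ≤ lam * (1 / (lam * h * exp (lam * h / 2))) := by
        gcongr
        exact mul_exp_half_le_exp_sub_one (by positivity)
    _ = exp (-(lam * h / 2)) / h := by
        rw [exp_neg]; field_simp
    _ ≤ shellBound (exp (-(1 / 2 * lam * c))) c k := by
        unfold shellBound
        gcongr

lemma hasSum_shellBound_sub {x c : ℝ} (hx : |x| < 1) (hc : c ≠ 0) :
    HasSum (fun n : ℕ => (n + 2) * c * (shellBound x c n - shellBound x c (n + 1)))
      (-log (1 - x) + x) := by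
  have hx1 : 1 - x ≠ 0 := by linarith [le_abs_self x]
  have hgeom : HasSum (fun n : ℕ => x ^ (n + 1) - x ^ (n + 2)) x := by
    have h := (hasSum_geometric_of_abs_lt_one hx).mul_left (x * (1 - x))
    rw [mul_assoc, mul_inv_cancel₀ hx1, mul_one] at h
    exact h.congr_fun fun n => by ring
  convert (hasSum_pow_div_log_of_abs_lt_one hx).add hgeom using 1
  ext n
  unfold shellBound
  push_cast
  field_simp
  ring

lemma tsum_ofReal_mul_shellBound_sub {x c : ℝ} (hx0 : 0 ≤ x) (hx1 : x < 1) (hc : 0 < c) :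
    ∑' i : ℕ, ENNReal.ofReal (9 * ((i + 2) * c)) *
        ENNReal.ofReal (shellBound x c i - shellBound x c (i + 1)) =
      ENNReal.ofReal (9 * (-log (1 - x) + x)) := by
  have hsum := (hasSum_shellBound_sub (abs_lt.2 ⟨by linarith, hx1⟩) hc.ne').mul_left 9
  have hdiff (i : ℕ) : 0 ≤ shellBound x c i - shellBound x c (i + 1) :=
    sub_nonneg.2 (antitone_shellBound hx0 hx1.le hc i.le_succ)
  rw [← hsum.tsum_eq, ENNReal.ofReal_tsum_of_nonneg (fun i => ?_) hsum.summable]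
  · refine tsum_congr fun i => ?_
    rw [← ENNReal.ofReal_mul (by positivity), mul_assoc]
  · exact mul_nonneg (by norm_num) (mul_nonneg (by positivity) (hdiff i))

/-- Free high-frequency tail: for `λ ∈ (0,1]` and `Λ₁ ≥ 1`,
`λ ∑_{h(p) > Λ₁²} 1/(e^{λ h(p)} - 1) ≤ C log(1/(1 - e^{-c λ Λ₁²}))`. -/
theorem free_high_frequency_tail :
    ∃ c C : ℝ, 0 < c ∧ 0 < C ∧
      ∀ lam : ℝ, lam ∈ Set.Ioc (0 : ℝ) 1 → ∀ Λ₁ : ℝ, 1 ≤ Λ₁ →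
        ENNReal.ofReal lam *
          ∑' p : {p : ℤ × ℤ // Λ₁ ^ 2 < 1 + nsq p},
            ENNReal.ofReal (1 / (Real.exp (lam * (1 + nsq p.1)) - 1)) ≤
        ENNReal.ofReal (C * Real.log (1 / (1 - Real.exp (-(c * lam * Λ₁ ^ 2))))) := by
  refine ⟨1 / 2, 18, by norm_num, by norm_num, fun lam ⟨hlam, _⟩ Λ₁ hΛ₁ => ?_⟩
  have hc : 1 ≤ Λ₁ ^ 2 := one_le_pow₀ hΛ₁
  have hc0 : 0 < Λ₁ ^ 2 := by positivity
  set x := exp (-(1 / 2 * lam * Λ₁ ^ 2))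
  have hx0 : 0 ≤ x := (exp_pos _).le
  have hx1 : x < 1 := Real.exp_lt_one_iff.2 (by nlinarith)
  have hxlog : x ≤ -log (1 - x) := by linarith [log_le_sub_one_of_pos (by linarith : 0 < 1 - x)]
  calc ENNReal.ofReal lam * ∑' p : {p : ℤ × ℤ // Λ₁ ^ 2 < 1 + nsq p},
        ENNReal.ofReal (1 / (exp (lam * (1 + nsq p.1)) - 1))
      = ∑' p : {p : ℤ × ℤ // Λ₁ ^ 2 < 1 + nsq p},
          ENNReal.ofReal (lam * (1 / (exp (lam * (1 + nsq p.1)) - 1))) := by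
        simp_rw [ENNReal.ofReal_mul hlam.le, ENNReal.tsum_mul_left]
    _ ≤ ∑' p : {p : ℤ × ℤ // Λ₁ ^ 2 < 1 + nsq p},
          ENNReal.ofReal (shellBound x (Λ₁ ^ 2) (shellIndex (Λ₁ ^ 2) p.1)) :=
        ENNReal.tsum_le_tsum fun p => ENNReal.ofReal_le_ofReal <|
          mul_one_div_exp_sub_one_le_shellBound hlam hc0 (shellIndex_bounds hc0 p.2).1
    _ = ∑' i : ℕ, ({a : {p : ℤ × ℤ // Λ₁ ^ 2 < 1 + nsq p} |
            shellIndex (Λ₁ ^ 2) a.1 ≤ i}.encard : ℝ≥0∞) *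
          ENNReal.ofReal (shellBound x (Λ₁ ^ 2) i - shellBound x (Λ₁ ^ 2) (i + 1)) :=
        ENNReal.tsum_ofReal_comp_eq_tsum_encard_mul _ (antitone_shellBound hx0 hx1.le hc0)
          (tendsto_shellBound hx0 hx1 _)
    _ ≤ ∑' i : ℕ, ENNReal.ofReal (9 * ((i + 2) * Λ₁ ^ 2)) *
          ENNReal.ofReal (shellBound x (Λ₁ ^ 2) i - shellBound x (Λ₁ ^ 2) (i + 1)) :=
        ENNReal.tsum_le_tsum fun i => by gcongr; exact encard_setOf_shellIndex_le hc i
    _ = ENNReal.ofReal (9 * (-log (1 - x) + x)) := tsum_ofReal_mul_shellBound_sub hx0 hx1 hc0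
    _ ≤ ENNReal.ofReal (18 * log (1 / (1 - x))) :=
        ENNReal.ofReal_le_ofReal (by rw [one_div, log_inv]; linarith)
end

section
/- Let α₁ > 1/2. Then there exist constants c > 0, C > 0 and λ₀ ∈ (0,1) such that for every λ ∈ (0,λ₀), λ · ∑_{p ∈ ℤ², 1+|p|² > λ^{−2α₁}} 1/(exp(λ(1+|p|²)) − 1) ≤ C · exp(−c λ^{1−2α₁}). -/
open scoped ENNReal

/-!
With `t = λ^{1-2α₁} ≥ 1`, every exponent `x = λ(1+|p|²)` in the tail satisfies `x ≥ t`, so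
`1/(eˣ-1) ≤ 2e^{-x} ≤ 2e^{-t/2} e^{-λ|p|²/2}`. The Gaussian lattice sum `∑ e^{-λ|p|²/2}`
factors as the square of a one-dimensional theta sum, which is `O(1/λ)` by comparison with a
geometric series. The tail is therefore `O(e^{-t/2}/λ)`, and since `α₁ > 1/2` the factor `1/λ`
is a power of `t`, absorbed by `e^{t/4}`.
-/

open Real

theorem one_div_exp_sub_one_le_two_mul_exp_neg {x : ℝ} (hx : 2 ≤ exp x) :
    1 / (exp x - 1) ≤ 2 * exp (-x) := by
  rw [exp_neg, div_le_iff₀ (by linarith)]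
  field_simp
  linarith

theorem ENNReal.tsum_natAbs_le_two_mul (f : ℕ → ℝ≥0∞) :
    ∑' n : ℤ, f n.natAbs ≤ 2 * ∑' n : ℕ, f n := by
  rw [tsum_of_nat_of_neg_add_one ENNReal.summable ENNReal.summable, two_mul]
  refine add_le_add (by simp) ?_
  have hneg : ∀ n : ℕ, (-((n : ℤ) + 1)).natAbs = n + 1 := fun n => by omega
  simpa only [hneg] using ENNReal.tsum_comp_le_tsum_of_injective Nat.succ_injective f

theorem one_sub_exp_neg_inv_le {s : ℝ} (hs : 0 < s) : (1 - exp (-s))⁻¹ ≤ 1 + 1 / s := by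
  have hexp := add_one_le_exp s
  have hpos : 0 < 1 - exp (-s) := by simpa using exp_lt_one_iff.mpr (neg_lt_zero.mpr hs)
  rw [inv_le_iff_one_le_mul₀ hpos, exp_neg]
  field_simp
  nlinarith

theorem ENNReal.tsum_ofReal_exp_neg_mul_nat_le {s : ℝ} (hs : 0 < s) :
    ∑' n : ℕ, ENNReal.ofReal (exp (-(s * n))) ≤ ENNReal.ofReal (1 + 1 / s) := by
  have hq : ∀ n : ℕ, ENNReal.ofReal (exp (-(s * n))) = ENNReal.ofReal (exp (-s)) ^ n := by
    intro n
    rw [← ENNReal.ofReal_pow (exp_nonneg _), ← exp_nat_mul]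
    ring_nf
  have hlt : exp (-s) < 1 := exp_lt_one_iff.mpr (neg_lt_zero.mpr hs)
  simp only [hq, ENNReal.tsum_geometric]
  rw [← ENNReal.ofReal_one, ← ENNReal.ofReal_sub _ (exp_nonneg _),
    ← ENNReal.ofReal_inv_of_pos (by linarith)]
  exact ENNReal.ofReal_le_ofReal (one_sub_exp_neg_inv_le hs)

theorem ENNReal.tsum_ofReal_exp_neg_mul_int_sq_le {s : ℝ} (hs : 0 < s) :
    ∑' n : ℤ, ENNReal.ofReal (exp (-(s * (n : ℝ) ^ 2))) ≤ ENNReal.ofReal (2 * (1 + 1 / s)) := by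
  calc ∑' n : ℤ, ENNReal.ofReal (exp (-(s * (n : ℝ) ^ 2)))
      ≤ ∑' n : ℤ, ENNReal.ofReal (exp (-(s * (n.natAbs : ℕ)))) := by
        refine ENNReal.tsum_le_tsum fun n => ENNReal.ofReal_le_ofReal (exp_le_exp.mpr ?_)
        have : ((n.natAbs : ℕ) : ℝ) ≤ (n : ℝ) ^ 2 := by
          rw [Nat.cast_natAbs, Int.cast_abs, ← sq_abs]
          rcases eq_or_ne n 0 with rfl | hn
          · simp
          · exact le_self_pow₀ (by exact_mod_cast Int.one_le_abs hn) two_ne_zero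
        nlinarith
    _ ≤ 2 * ∑' n : ℕ, ENNReal.ofReal (exp (-(s * n))) :=
        ENNReal.tsum_natAbs_le_two_mul fun n => ENNReal.ofReal (exp (-(s * n)))
    _ ≤ 2 * ENNReal.ofReal (1 + 1 / s) := by
        gcongr; exact ENNReal.tsum_ofReal_exp_neg_mul_nat_le hs
    _ = ENNReal.ofReal (2 * (1 + 1 / s)) := by
        rw [ENNReal.ofReal_mul zero_le_two, ENNReal.ofReal_ofNat]

theorem tsum_ofReal_exp_neg_mul_nsq (s : ℝ) :
    ∑' p : ℤ × ℤ, ENNReal.ofReal (exp (-(s * nsq p))) =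
      (∑' n : ℤ, ENNReal.ofReal (exp (-(s * (n : ℝ) ^ 2)))) ^ 2 := by
  have hsplit : ∀ p : ℤ × ℤ, ENNReal.ofReal (exp (-(s * nsq p))) =
      ENNReal.ofReal (exp (-(s * (p.1 : ℝ) ^ 2))) * ENNReal.ofReal (exp (-(s * (p.2 : ℝ) ^ 2))) := by
    intro p
    rw [← ENNReal.ofReal_mul (exp_nonneg _), ← exp_add, nsq]
    ring_nf
  simp only [hsplit, ENNReal.tsum_prod', ENNReal.tsum_mul_left, ENNReal.tsum_mul_right, sq]

theorem exists_inv_le_mul_exp_mul_rpow_neg {β c : ℝ} (hβ : 0 < β) (hc : 0 < c) :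
    ∃ C > 0, ∀ x : ℝ, 0 < x → x ≤ 1 → x⁻¹ ≤ C * exp (c * x ^ (-β)) := by
  set k := ⌈β⁻¹⌉₊
  have hk : 1 ≤ β * k := by
    rw [← div_le_iff₀' hβ, one_div]; exact Nat.le_ceil _
  refine ⟨k.factorial / c ^ k, by positivity, fun x hx hx1 => ?_⟩
  have hpow : x⁻¹ ≤ (x ^ (-β)) ^ k := by
    rw [← rpow_natCast, ← rpow_mul hx.le, ← rpow_neg_one]
    exact rpow_le_rpow_of_exponent_ge hx hx1 (by linarith)
  have hexp := pow_div_factorial_le_exp _ (mul_nonneg hc.le (rpow_nonneg hx.le (-β))) k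
  calc x⁻¹ ≤ (x ^ (-β)) ^ k := hpow
    _ = k.factorial / c ^ k * ((c * x ^ (-β)) ^ k / k.factorial) := by
        field_simp; ring
    _ ≤ k.factorial / c ^ k * exp (c * x ^ (-β)) := by gcongr

theorem one_div_exp_sub_one_le_of_lt_one_add_nsq {lam Λ : ℝ} {p : ℤ × ℤ} (hlam : 0 < lam)
    (hΛ : 1 ≤ lam * Λ) (hp : Λ < 1 + nsq p) :
    1 / (exp (lam * (1 + nsq p)) - 1) ≤
      2 * exp (-(lam * Λ / 2)) * exp (-(lam / 2 * nsq p)) := by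
  have hnsq : 0 ≤ nsq p := by unfold nsq; positivity
  have hx : lam * Λ ≤ lam * (1 + nsq p) := by gcongr
  calc 1 / (exp (lam * (1 + nsq p)) - 1) ≤ 2 * exp (-(lam * (1 + nsq p))) :=
        one_div_exp_sub_one_le_two_mul_exp_neg (by linarith [add_one_le_exp (lam * (1 + nsq p))])
    _ ≤ 2 * exp (-(lam * Λ / 2) + -(lam / 2 * nsq p)) := by
        gcongr; nlinarith
    _ = 2 * exp (-(lam * Λ / 2)) * exp (-(lam / 2 * nsq p)) := by rw [exp_add, mul_assoc]

theorem tsum_high_frequency_le {lam Λ : ℝ} (hlam : 0 < lam) (hΛ : 1 ≤ lam * Λ) :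
    ∑' p : {p : ℤ × ℤ // Λ < 1 + nsq p},
        ENNReal.ofReal (1 / (exp (lam * (1 + nsq p.1)) - 1)) ≤
      ENNReal.ofReal (2 * exp (-(lam * Λ / 2))) *
        ∑' p : ℤ × ℤ, ENNReal.ofReal (exp (-(lam / 2 * nsq p))) := by
  rw [← ENNReal.tsum_mul_left]
  calc _ ≤ ∑' p : {p : ℤ × ℤ // Λ < 1 + nsq p},
        ENNReal.ofReal (2 * exp (-(lam * Λ / 2))) * ENNReal.ofReal (exp (-(lam / 2 * nsq p.1))) := by
        refine ENNReal.tsum_le_tsum fun p => ?_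
        rw [← ENNReal.ofReal_mul (by positivity)]
        exact ENNReal.ofReal_le_ofReal (one_div_exp_sub_one_le_of_lt_one_add_nsq hlam hΛ p.2)
    _ ≤ _ := ENNReal.tsum_comp_le_tsum_of_injective Subtype.val_injective _

/-- Exponential smallness of the free high-frequency tail at the second cutoff
`Λ₁ = λ^{-α₁}`, for `α₁ > 1/2`. -/
theorem free_high_frequency_tail_exponential (α₁ : ℝ) (hα : 1 / 2 < α₁) :
    ∃ c C lam₀ : ℝ, 0 < c ∧ 0 < C ∧ lam₀ ∈ Set.Ioo (0 : ℝ) 1 ∧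
      ∀ lam : ℝ, lam ∈ Set.Ioo (0 : ℝ) lam₀ →
        ENNReal.ofReal lam *
          ∑' p : {p : ℤ × ℤ // lam ^ (-(2 * α₁)) < 1 + nsq p},
            ENNReal.ofReal (1 / (Real.exp (lam * (1 + nsq p.1)) - 1)) ≤
        ENNReal.ofReal (C * Real.exp (-(c * lam ^ (1 - 2 * α₁)))) := by
  obtain ⟨C, hC, hinv⟩ :=
    exists_inv_le_mul_exp_mul_rpow_neg (β := 2 * α₁ - 1) (c := 1 / 4) (by linarith) (by norm_num)
  refine ⟨1 / 4, 72 * C, 1 / 2, by norm_num, by positivity, by norm_num, ?_⟩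
  rintro lam ⟨hlam, hlam_lt⟩
  set t := lam ^ (1 - 2 * α₁)
  have hlt : lam * lam ^ (-(2 * α₁)) = t := by
    rw [← rpow_one_add' hlam.le (by linarith), ← sub_eq_add_neg]
  have ht : 1 ≤ t := one_le_rpow_of_pos_of_le_one_of_nonpos hlam (by linarith) (by linarith)
  have hinv_t : lam⁻¹ ≤ C * exp (1 / 4 * t) := by
    simpa only [neg_sub] using hinv lam hlam (by linarith)
  have hgauss := tsum_ofReal_exp_neg_mul_nsq (lam / 2) ▸
    pow_le_pow_left₀ bot_le (ENNReal.tsum_ofReal_exp_neg_mul_int_sq_le (half_pos hlam)) 2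
  calc _ ≤ ENNReal.ofReal lam * (ENNReal.ofReal (2 * exp (-(t / 2))) *
          ENNReal.ofReal (2 * (1 + 1 / (lam / 2))) ^ 2) := by
        gcongr
        have htail := tsum_high_frequency_le (Λ := lam ^ (-(2 * α₁))) hlam (hlt ▸ ht)
        rw [hlt] at htail
        exact htail.trans (by gcongr)
    _ = ENNReal.ofReal (8 * exp (-(t / 2)) * ((lam + 2) ^ 2 * lam⁻¹)) := by
        rw [← ENNReal.ofReal_pow (by positivity), ← ENNReal.ofReal_mul (by positivity),
          ← ENNReal.ofReal_mul hlam.le]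
        congr 1
        field_simp
        ring
    _ ≤ ENNReal.ofReal (8 * exp (-(t / 2)) * (9 * (C * exp (1 / 4 * t)))) := by
        gcongr ENNReal.ofReal (_ * ?_)
        exact mul_le_mul (by nlinarith) hinv_t (by positivity) (by norm_num)
    _ = ENNReal.ofReal (72 * C * exp (-(1 / 4 * t))) := by
        rw [show -(1 / 4 * t) = -(t / 2) + 1 / 4 * t by ring, exp_add]
        ring_nf
end

section
/- Let 3/2 < β ≤ 2. Then there exists a constant C > 0 such that for every real Λ ≥ 2, ∑_{k ∈ ℤ², k ≠ 0} (1+|k|²)^{−β/2} · ( ∑_{p ∈ ℤ², 1+|p|² > Λ² and 1+|p+k|² > Λ²} 1/((1+|p|²)(1+|p+k|²)) ) ≤ C · (1+log Λ) · Λ^{−β}. -/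
open scoped ENNReal

/-!
Write `h p = 1 + |p|²` and `L = Λ²`. Since `h k ≤ 4 max (h p) (h (p + k))` and both legs
exceed `L`, the summand `1 / (h p h (p + k))` is at most
`max (L, h k / 4) ^ (-1/2) (h p ^ (-3/2) + h (p + k) ^ (-3/2))`, so the lattice tail bound
`∑_{h p > M} h p ^ (-α) = O(M ^ (1 - α))` (for `α > 1`) bounds the inner sum by
`O(L ^ (-1/2) max (L, h k / 4) ^ (-1/2))`. Against the weight, the modes with `h k ≤ L` give
`L ^ (-β/2) ∑_{h k ≤ L} h k ^ (-1) = O(L ^ (-β/2) log L)`, because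
`h k ^ (-β/2) ≤ L ^ (1 - β/2) h k ^ (-1)` there, and the modes with `h k > L` give
`L ^ (-1/2) ∑_{h k > L} h k ^ (-(β+1)/2) = O(L ^ (-β/2))`. Both lattice sums are estimated on
dyadic shells `A 2 ^ j ≤ h < A 2 ^ (j + 1)`, which contain `O(A 2 ^ j)` points.
-/

open Set

lemma one_le_one_add_nsq (p : ℤ × ℤ) : 1 ≤ 1 + nsq p := by
  have : 0 ≤ nsq p := by unfold nsq; positivity
  linarith

lemma one_add_nsq_pos (p : ℤ × ℤ) : 0 < 1 + nsq p :=
  one_pos.trans_le (one_le_one_add_nsq p)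

lemma one_add_nsq_le_four_mul_max (p k : ℤ × ℤ) :
    1 + nsq k ≤ 4 * max (1 + nsq p) (1 + nsq (p + k)) := by
  have parallelogram : nsq k ≤ 2 * nsq p + 2 * nsq (p + k) := by
    simp only [nsq, Prod.fst_add, Prod.snd_add, Int.cast_add]
    nlinarith [sq_nonneg (2 * (p.1 : ℝ) + k.1), sq_nonneg (2 * (p.2 : ℝ) + k.2)]
  linarith [le_max_left (1 + nsq p) (1 + nsq (p + k)), le_max_right (1 + nsq p) (1 + nsq (p + k))]

lemma encard_setOf_one_add_nsq_le {t : ℝ} (ht : 1 ≤ t) :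
    ({p : ℤ × ℤ | 1 + nsq p ≤ t}.encard : ℝ≥0∞) ≤ ENNReal.ofReal (9 * t) := by
  set n : ℤ := ⌊√t⌋
  have coord_mem : ∀ x : ℤ, (x : ℝ) ^ 2 ≤ t → x ∈ Finset.Icc (-n) n := fun x hx => by
    have habs := Real.abs_le_sqrt hx
    have h1 : x ≤ n := Int.le_floor.2 (le_of_abs_le habs)
    have h2 : -x ≤ n := Int.le_floor.2 (by push_cast; linarith [(abs_le.1 habs).1])
    rw [Finset.mem_Icc]
    constructor <;> linarith
  have hsub : {p : ℤ × ℤ | 1 + nsq p ≤ t} ⊆ ↑(Finset.Icc (-n) n ×ˢ Finset.Icc (-n) n) := by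
    intro p (hp : 1 + nsq p ≤ t)
    simp only [nsq] at hp
    rw [Finset.coe_product, mem_prod]
    exact ⟨coord_mem _ (by nlinarith [sq_nonneg (p.2 : ℝ)]),
      coord_mem _ (by nlinarith [sq_nonneg (p.1 : ℝ)])⟩
  have hn0 : 0 ≤ n := Int.floor_nonneg.2 (Real.sqrt_nonneg t)
  have hcard : ((Finset.Icc (-n) n ×ˢ Finset.Icc (-n) n).card : ℝ) = (2 * n + 1) ^ 2 := by
    have : ((Finset.Icc (-n) n ×ˢ Finset.Icc (-n) n).card : ℤ) = (2 * n + 1) ^ 2 := by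
      rw [Finset.card_product, Int.card_Icc, show n + 1 - -n = 2 * n + 1 by ring]
      push_cast [Int.toNat_of_nonneg (by omega : 0 ≤ 2 * n + 1)]
      ring
    exact_mod_cast this
  have hsqrt : 1 ≤ √t := Real.one_le_sqrt.2 ht
  have hn : (n : ℝ) ≤ √t := Int.floor_le _
  have hbox : (2 * (n : ℝ) + 1) ^ 2 ≤ 9 * t := by
    nlinarith [Real.sq_sqrt (zero_le_one.trans ht), (Int.cast_nonneg hn0 : (0 : ℝ) ≤ n)]
  calc ({p : ℤ × ℤ | 1 + nsq p ≤ t}.encard : ℝ≥0∞)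
      ≤ ((Finset.Icc (-n) n ×ˢ Finset.Icc (-n) n).card : ℝ≥0∞) := by
        have := Set.encard_le_encard hsub
        rw [Set.encard_coe_eq_coe_finsetCard] at this
        exact_mod_cast this
    _ ≤ ENNReal.ofReal (9 * t) := by
        rw [← ENNReal.ofReal_natCast]
        exact ENNReal.ofReal_le_ofReal (hcard ▸ hbox)

lemma tsum_le_dyadic_shells {A : ℝ} (hA : 1 ≤ A) {s : Set (ℤ × ℤ)}
    (hs : ∀ p ∈ s, A ≤ 1 + nsq p) (F : ℤ × ℤ → ℝ≥0∞) (c : ℕ → ℝ≥0∞)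
    (hF : ∀ j : ℕ, ∀ p ∈ s, A * 2 ^ j ≤ 1 + nsq p → F p ≤ c j) :
    ∑' p : s, F p ≤ ∑' j : ℕ, ENNReal.ofReal (18 * (A * 2 ^ j)) * c j := by
  set shell : ℕ → Set (ℤ × ℤ) := fun j =>
    s ∩ {p | A * 2 ^ j ≤ 1 + nsq p ∧ 1 + nsq p ≤ A * 2 ^ (j + 1)}
  have hA0 : 0 < A := one_pos.trans_le hA
  have hcover : s ⊆ ⋃ j, shell j := fun p hp => by
    obtain ⟨j, hj, hj'⟩ := exists_nat_pow_near (x := (1 + nsq p) / A) (y := (2 : ℝ))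
      ((one_le_div hA0).2 (hs p hp)) one_lt_two
    rw [le_div_iff₀' hA0] at hj
    rw [div_lt_iff₀' hA0] at hj'
    exact mem_iUnion.2 ⟨j, hp, hj, hj'.le⟩
  have hshell : ∀ j, ((shell j).encard : ℝ≥0∞) ≤ ENNReal.ofReal (18 * (A * 2 ^ j)) := fun j =>
    calc ((shell j).encard : ℝ≥0∞) ≤ {p : ℤ × ℤ | 1 + nsq p ≤ A * 2 ^ (j + 1)}.encard := by
          exact_mod_cast Set.encard_le_encard fun p (hp : p ∈ shell j) => hp.2.2
      _ ≤ ENNReal.ofReal (9 * (A * 2 ^ (j + 1))) :=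
          encard_setOf_one_add_nsq_le
            (hA.trans (le_mul_of_one_le_right hA0.le (one_le_pow₀ one_le_two)))
      _ = ENNReal.ofReal (18 * (A * 2 ^ j)) := by ring_nf
  calc ∑' p : s, F p ≤ ∑' p : ↑(⋃ j, shell j), F p := ENNReal.tsum_mono_subtype F hcover
    _ ≤ ∑' (j : ℕ) (p : shell j), F p := ENNReal.tsum_iUnion_le_tsum F shell
    _ ≤ ∑' (j : ℕ) (_ : shell j), c j :=
        ENNReal.tsum_le_tsum fun j => ENNReal.tsum_le_tsum fun p => hF j p p.2.1 p.2.2.1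
    _ ≤ ∑' j : ℕ, ENNReal.ofReal (18 * (A * 2 ^ j)) * c j := by
        simp only [ENNReal.tsum_set_const]
        exact ENNReal.tsum_le_tsum fun j => mul_le_mul_left (hshell j) _

lemma tsum_rpow_neg_tail_le {α : ℝ} (hα : 1 < α) :
    ∃ C > 0, ∀ M : ℝ, 1 ≤ M →
      ∑' p : {p : ℤ × ℤ | M < 1 + nsq p}, ENNReal.ofReal ((1 + nsq p) ^ (-α)) ≤
        ENNReal.ofReal (C * M ^ (1 - α)) := by
  set r : ℝ := 2 ^ (1 - α)
  have hr0 : 0 ≤ r := by positivity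
  have hr1 : r < 1 := Real.rpow_lt_one_of_one_lt_of_neg one_lt_two (by linarith)
  refine ⟨18 * (1 - r)⁻¹, by have := sub_pos.2 hr1; positivity, fun M hM => ?_⟩
  have hM0 : 0 < M := one_pos.trans_le hM
  have hshell : ∀ j : ℕ, 18 * (M * 2 ^ j) * (M * 2 ^ j) ^ (-α) = 18 * M ^ (1 - α) * r ^ j := by
    intro j
    have hMj : 0 < M * 2 ^ j := by positivity
    have hpow : ((2 : ℝ) ^ j) ^ (1 - α) = r ^ j := by
      rw [← Real.rpow_natCast_mul zero_le_two, mul_comm, Real.rpow_mul_natCast zero_le_two]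
    rw [mul_assoc, ← Real.rpow_one_add' hMj.le (by linarith), ← sub_eq_add_neg,
      Real.mul_rpow hM0.le (by positivity), hpow, mul_assoc]
  calc ∑' p : {p : ℤ × ℤ | M < 1 + nsq p}, ENNReal.ofReal ((1 + nsq p) ^ (-α))
      ≤ ∑' j : ℕ, ENNReal.ofReal (18 * (M * 2 ^ j)) * ENNReal.ofReal ((M * 2 ^ j) ^ (-α)) :=
        tsum_le_dyadic_shells hM (fun p hp => le_of_lt hp) _ _ fun j p _ hjp =>
          ENNReal.ofReal_le_ofReal (Real.rpow_le_rpow_of_nonpos (by positivity) hjp (by linarith))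
    _ = ENNReal.ofReal (∑' j : ℕ, 18 * M ^ (1 - α) * r ^ j) := by
        rw [ENNReal.ofReal_tsum_of_nonneg (fun j => by positivity)
          ((summable_geometric_of_lt_one hr0 hr1).mul_left _)]
        congr 1 with j
        rw [← ENNReal.ofReal_mul (by positivity), hshell]
    _ = ENNReal.ofReal (18 * (1 - r)⁻¹ * M ^ (1 - α)) := by
        rw [tsum_mul_left, tsum_geometric_of_lt_one hr0 hr1]
        ring_nf

lemma tsum_inv_head_le_log {T : ℝ} (hT : 1 ≤ T) :
    ∑' p : {p : ℤ × ℤ | 1 + nsq p ≤ T}, ENNReal.ofReal (1 + nsq p)⁻¹ ≤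
      ENNReal.ofReal (36 * (1 + Real.log T)) := by
  set N := ⌊2 * Real.log T⌋₊ + 1
  have hlog : 0 ≤ Real.log T := Real.log_nonneg hT
  have hvanish : ∀ j ∉ Finset.range N,
      (if (2 : ℝ) ^ j ≤ T then (18 : ℝ≥0∞) else 0) = 0 := fun j hj => by
    refine if_neg fun h2j => hj (Finset.mem_range.2 (Nat.lt_succ_of_le (Nat.le_floor ?_)))
    have hjlog : j * Real.log 2 ≤ Real.log T := by
      rw [← Real.log_pow]; exact Real.log_le_log (by positivity) h2j
    nlinarith [Real.log_two_gt_d9, (Nat.cast_nonneg j : (0 : ℝ) ≤ j)]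
  calc ∑' p : {p : ℤ × ℤ | 1 + nsq p ≤ T}, ENNReal.ofReal (1 + nsq p)⁻¹
      ≤ ∑' j : ℕ, ENNReal.ofReal (18 * (1 * 2 ^ j)) *
          (if (2 : ℝ) ^ j ≤ T then ENNReal.ofReal (2 ^ j)⁻¹ else 0) :=
        tsum_le_dyadic_shells le_rfl (fun p _ => one_le_one_add_nsq p)
          (fun p => ENNReal.ofReal (1 + nsq p)⁻¹)
          (fun j => if (2 : ℝ) ^ j ≤ T then ENNReal.ofReal (2 ^ j)⁻¹ else 0) fun j p hp hjp => by
          rw [one_mul] at hjp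
          rw [if_pos (hjp.trans hp)]
          exact ENNReal.ofReal_le_ofReal (inv_anti₀ (by positivity) hjp)
    _ = ∑' j : ℕ, if (2 : ℝ) ^ j ≤ T then (18 : ℝ≥0∞) else 0 := by
        congr 1 with j
        split_ifs
        · rw [← ENNReal.ofReal_mul (by positivity), one_mul, mul_assoc,
            mul_inv_cancel₀ (by positivity), mul_one, ENNReal.ofReal_ofNat]
        · rw [mul_zero]
    _ = ∑ j ∈ Finset.range N, if (2 : ℝ) ^ j ≤ T then (18 : ℝ≥0∞) else 0 := tsum_eq_sum hvanish
    _ ≤ ∑ _j ∈ Finset.range N, (18 : ℝ≥0∞) := Finset.sum_le_sum fun j _ => by split_ifs <;> simp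
    _ ≤ ENNReal.ofReal (36 * (1 + Real.log T)) := by
        rw [Finset.sum_const, Finset.card_range, nsmul_eq_mul, ← ENNReal.ofReal_natCast,
          ← ENNReal.ofReal_ofNat 18, ← ENNReal.ofReal_mul (by positivity)]
        refine ENNReal.ofReal_le_ofReal ?_
        have : (⌊2 * Real.log T⌋₊ : ℝ) ≤ 2 * Real.log T := Nat.floor_le (by positivity)
        push_cast [N]
        linarith

lemma one_div_mul_le_of_le_max {x y m δ : ℝ} (hx : 0 < x) (hy : 0 < y) (hm : 0 < m)
    (hδ0 : 0 ≤ δ) (hδ1 : δ ≤ 1) (hmax : m ≤ max x y) :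
    1 / (x * y) ≤ m ^ (δ - 1) * (x ^ (-(1 + δ)) + y ^ (-(1 + δ))) := by
  wlog hxy : x ≤ y generalizing x y
  · rw [mul_comm, add_comm]
    exact this hy hx (max_comm x y ▸ hmax) (le_of_not_ge hxy)
  have hmy : m ≤ y := max_eq_right hxy ▸ hmax
  calc 1 / (x * y) = x ^ (-1 : ℝ) * y ^ (-δ) * y ^ (δ - 1) := by
        rw [mul_assoc, ← Real.rpow_add hy, show -δ + (δ - 1) = (-1 : ℝ) by ring,
          Real.rpow_neg_one, Real.rpow_neg_one, one_div, mul_inv]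
    _ ≤ x ^ (-1 : ℝ) * x ^ (-δ) * m ^ (δ - 1) := by
        gcongr ?_ * ?_ * ?_
        · exact Real.rpow_le_rpow_of_nonpos hx hxy (by linarith)
        · exact Real.rpow_le_rpow_of_nonpos hm hmy (by linarith)
    _ = m ^ (δ - 1) * x ^ (-(1 + δ)) := by
        rw [← Real.rpow_add hx, mul_comm, neg_add]
    _ ≤ m ^ (δ - 1) * (x ^ (-(1 + δ)) + y ^ (-(1 + δ))) := by
        gcongr
        exact le_add_of_nonneg_right (by positivity)

lemma tsum_high_high_le {L : ℝ} (hL : 0 < L) (k : ℤ × ℤ) {δ : ℝ} (hδ0 : 0 ≤ δ) (hδ1 : δ ≤ 1) :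
    ∑' p : {p : ℤ × ℤ // L < 1 + nsq p ∧ L < 1 + nsq (p + k)},
        ENNReal.ofReal (1 / ((1 + nsq p) * (1 + nsq (p + k)))) ≤
      2 * ENNReal.ofReal (max L ((1 + nsq k) / 4) ^ (δ - 1)) *
        ∑' p : {p : ℤ × ℤ | L < 1 + nsq p}, ENNReal.ofReal ((1 + nsq p) ^ (-(1 + δ))) := by
  set F : ℤ × ℤ → ℝ≥0∞ := fun p => ENNReal.ofReal ((1 + nsq p) ^ (-(1 + δ)))
  set c := ENNReal.ofReal (max L ((1 + nsq k) / 4) ^ (δ - 1))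
  have hpoint : ∀ p : {p : ℤ × ℤ // L < 1 + nsq p ∧ L < 1 + nsq (p + k)},
      ENNReal.ofReal (1 / ((1 + nsq p) * (1 + nsq (p + k)))) ≤ c * (F p + F (p.1 + k)) := by
    rintro ⟨p, hp, -⟩
    have hmax : max L ((1 + nsq k) / 4) ≤ max (1 + nsq p) (1 + nsq (p + k)) :=
      max_le (hp.le.trans (le_max_left _ _))
        (by linarith [one_add_nsq_le_four_mul_max p k])
    rw [← ENNReal.ofReal_add (Real.rpow_nonneg (one_add_nsq_pos p).le _)
      (Real.rpow_nonneg (one_add_nsq_pos (p + k)).le _), ← ENNReal.ofReal_mul (by positivity)]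
    exact ENNReal.ofReal_le_ofReal (one_div_mul_le_of_le_max (one_add_nsq_pos p)
      (one_add_nsq_pos (p + k)) (hL.trans_le (le_max_left _ _)) hδ0 hδ1 hmax)
  calc _ ≤ ∑' p : {p : ℤ × ℤ // L < 1 + nsq p ∧ L < 1 + nsq (p + k)}, c * (F p + F (p.1 + k)) :=
        ENNReal.tsum_le_tsum hpoint
    _ = c * (∑' p : {p : ℤ × ℤ // L < 1 + nsq p ∧ L < 1 + nsq (p + k)}, F p +
          ∑' p : {p : ℤ × ℤ // L < 1 + nsq p ∧ L < 1 + nsq (p + k)}, F (p.1 + k)) := by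
        rw [ENNReal.tsum_mul_left, ENNReal.tsum_add]
    _ ≤ c * (∑' p : {p : ℤ × ℤ | L < 1 + nsq p}, F p +
          ∑' p : {p : ℤ × ℤ | L < 1 + nsq p}, F p) := by
        gcongr c * (?_ + ?_)
        · exact ENNReal.tsum_mono_subtype F fun p hp => hp.1
        · calc _ ≤ ∑' p : {p : ℤ × ℤ | L < 1 + nsq (p + k)}, F (p.1 + k) :=
                ENNReal.tsum_mono_subtype (fun p => F (p + k)) fun p hp => hp.2
            _ = ∑' p : {p : ℤ × ℤ | L < 1 + nsq p}, F p :=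
                ((Equiv.addRight k).subtypeEquiv (p := (· ∈ {p : ℤ × ℤ | L < 1 + nsq (p + k)}))
                  (q := (· ∈ {p : ℤ × ℤ | L < 1 + nsq p})) fun _ => Iff.rfl).tsum_eq fun p => F p
    _ = 2 * c * ∑' p : {p : ℤ × ℤ | L < 1 + nsq p}, F p := by ring

lemma tsum_rpow_mul_max_rpow_le {β L : ℝ} (hβ : β ≤ 2) (hL : 0 < L) :
    ∑' k : ℤ × ℤ,
        ENNReal.ofReal ((1 + nsq k) ^ (-(β / 2)) * max L ((1 + nsq k) / 4) ^ (-(1 / 2 : ℝ))) ≤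
      ENNReal.ofReal (L ^ ((1 - β) / 2)) *
          ∑' k : {k : ℤ × ℤ | 1 + nsq k ≤ L}, ENNReal.ofReal (1 + nsq k)⁻¹ +
        2 * ∑' k : {k : ℤ × ℤ | L < 1 + nsq k},
          ENNReal.ofReal ((1 + nsq k) ^ (-((β + 1) / 2))) := by
  set f : ℤ × ℤ → ℝ≥0∞ := fun k =>
    ENNReal.ofReal ((1 + nsq k) ^ (-(β / 2)) * max L ((1 + nsq k) / 4) ^ (-(1 / 2 : ℝ)))
  have low : ∀ k ∈ {k : ℤ × ℤ | 1 + nsq k ≤ L},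
      f k ≤ ENNReal.ofReal (L ^ ((1 - β) / 2)) * ENNReal.ofReal (1 + nsq k)⁻¹ := by
    intro k (hk : 1 + nsq k ≤ L)
    have ha := one_add_nsq_pos k
    simp only [f]
    rw [max_eq_left (by linarith), ← ENNReal.ofReal_mul (by positivity)]
    refine ENNReal.ofReal_le_ofReal ?_
    calc (1 + nsq k) ^ (-(β / 2)) * L ^ (-(1 / 2 : ℝ))
        = (1 + nsq k) ^ (1 - β / 2) * L ^ (-(1 / 2 : ℝ)) * (1 + nsq k)⁻¹ := by
          rw [← Real.rpow_neg_one, mul_right_comm, ← Real.rpow_add ha]; ring_nf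
      _ ≤ L ^ (1 - β / 2) * L ^ (-(1 / 2 : ℝ)) * (1 + nsq k)⁻¹ := by
          gcongr
          linarith
      _ = L ^ ((1 - β) / 2) * (1 + nsq k)⁻¹ := by
          rw [← Real.rpow_add hL]; ring_nf
  have high : ∀ k ∈ {k : ℤ × ℤ | L < 1 + nsq k},
      f k ≤ 2 * ENNReal.ofReal ((1 + nsq k) ^ (-((β + 1) / 2))) := by
    intro k _
    have ha := one_add_nsq_pos k
    simp only [f]
    rw [← ENNReal.ofReal_ofNat 2, ← ENNReal.ofReal_mul zero_le_two]
    refine ENNReal.ofReal_le_ofReal ?_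
    calc (1 + nsq k) ^ (-(β / 2)) * max L ((1 + nsq k) / 4) ^ (-(1 / 2 : ℝ))
        ≤ (1 + nsq k) ^ (-(β / 2)) * ((1 + nsq k) / 4) ^ (-(1 / 2 : ℝ)) := by
          refine mul_le_mul_of_nonneg_left ?_ (by positivity)
          exact Real.rpow_le_rpow_of_nonpos (div_pos ha four_pos) (le_max_right _ _) (by norm_num)
      _ = 2 * (1 + nsq k) ^ (-((β + 1) / 2)) := by
          have h4 : (4 : ℝ) ^ (-(1 / 2 : ℝ)) = 2⁻¹ := by
            rw [show (4 : ℝ) = 2 ^ (2 : ℝ) by norm_num, ← Real.rpow_mul zero_le_two]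
            norm_num
          rw [Real.div_rpow ha.le (by norm_num), h4, div_inv_eq_mul, ← mul_assoc,
            ← Real.rpow_add ha, show -(β / 2) + -(1 / 2) = -((β + 1) / 2) by ring, mul_comm]
  have hcover : (univ : Set (ℤ × ℤ)) ⊆ {k | 1 + nsq k ≤ L} ∪ {k | L < 1 + nsq k} :=
    fun k _ => le_or_gt (1 + nsq k) L
  calc ∑' k, f k = ∑' k : (univ : Set (ℤ × ℤ)), f k := (tsum_univ f).symm
    _ ≤ ∑' k : ↑({k | 1 + nsq k ≤ L} ∪ {k | L < 1 + nsq k}), f k :=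
        ENNReal.tsum_mono_subtype f hcover
    _ ≤ ∑' k : {k : ℤ × ℤ | 1 + nsq k ≤ L}, f k + ∑' k : {k : ℤ × ℤ | L < 1 + nsq k}, f k :=
        ENNReal.tsum_union_le f _ _
    _ ≤ _ := by
        rw [← ENNReal.tsum_mul_left, ← ENNReal.tsum_mul_left]
        exact add_le_add (ENNReal.tsum_le_tsum fun k => low k k.2)
          (ENNReal.tsum_le_tsum fun k => high k k.2)

lemma tsum_weight_mul_high_high_le {β L : ℝ} (hL : 0 < L) :
    ∑' k : {k : ℤ × ℤ // k ≠ 0}, ENNReal.ofReal ((1 + nsq k.1) ^ (-(β / 2))) *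
        ∑' p : {p : ℤ × ℤ // L < 1 + nsq p ∧ L < 1 + nsq (p + k.1)},
          ENNReal.ofReal (1 / ((1 + nsq p.1) * (1 + nsq (p.1 + k.1)))) ≤
      2 * (∑' p : {p : ℤ × ℤ | L < 1 + nsq p}, ENNReal.ofReal ((1 + nsq p) ^ (-(1 + 1 / 2 : ℝ)))) *
        ∑' k : ℤ × ℤ, ENNReal.ofReal
          ((1 + nsq k) ^ (-(β / 2)) * max L ((1 + nsq k) / 4) ^ (-(1 / 2 : ℝ))) := by
  rw [mul_comm, ← ENNReal.tsum_mul_right]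
  refine (ENNReal.tsum_le_tsum fun k => ?_).trans
    (ENNReal.tsum_comp_le_tsum_of_injective Subtype.val_injective _)
  rw [ENNReal.ofReal_mul (Real.rpow_nonneg (one_add_nsq_pos _).le _),
    show (-(1 / 2) : ℝ) = 1 / 2 - 1 by norm_num, mul_assoc, ← mul_assoc _ 2, mul_comm _ 2]
  gcongr
  exact tsum_high_high_le hL k.1 (by norm_num) (by norm_num)

lemma tsum_weight_mul_high_high_le_log {β : ℝ} (hβ1 : 1 < β) (hβ2 : β ≤ 2) :
    ∃ C > 0, ∀ L : ℝ, 1 ≤ L →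
      ∑' k : {k : ℤ × ℤ // k ≠ 0}, ENNReal.ofReal ((1 + nsq k.1) ^ (-(β / 2))) *
          ∑' p : {p : ℤ × ℤ // L < 1 + nsq p ∧ L < 1 + nsq (p + k.1)},
            ENNReal.ofReal (1 / ((1 + nsq p.1) * (1 + nsq (p.1 + k.1)))) ≤
        ENNReal.ofReal (C * (1 + Real.log L) * L ^ (-(β / 2))) := by
  obtain ⟨C₁, hC₁, htail₁⟩ := tsum_rpow_neg_tail_le (α := 1 + 1 / 2) (by norm_num)
  obtain ⟨C₂, hC₂, htail₂⟩ := tsum_rpow_neg_tail_le (α := (β + 1) / 2) (by linarith)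
  refine ⟨2 * C₁ * (36 + 2 * C₂), by positivity, fun L hL => ?_⟩
  have hL0 : 0 < L := one_pos.trans_le hL
  have hlog : 0 ≤ Real.log L := Real.log_nonneg hL
  have hexp : L ^ (1 - (1 + 1 / 2 : ℝ)) * L ^ ((1 - β) / 2) = L ^ (-(β / 2)) := by
    rw [← Real.rpow_add hL0]; ring_nf
  calc _ ≤ 2 * ENNReal.ofReal (C₁ * L ^ (1 - (1 + 1 / 2 : ℝ))) *
          (ENNReal.ofReal (L ^ ((1 - β) / 2)) * ENNReal.ofReal (36 * (1 + Real.log L)) +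
            2 * ENNReal.ofReal (C₂ * L ^ ((1 - β) / 2))) := by
        refine (tsum_weight_mul_high_high_le hL0).trans ?_
        gcongr
        · exact htail₁ L hL
        · refine (tsum_rpow_mul_max_rpow_le hβ2 hL0).trans ?_
          gcongr
          · exact tsum_inv_head_le_log hL
          · simpa only [show 1 - (β + 1) / 2 = (1 - β) / 2 by ring] using htail₂ L hL
    _ = ENNReal.ofReal (2 * C₁ * L ^ (-(β / 2)) * (36 * (1 + Real.log L) + 2 * C₂)) := by
        rw [← ENNReal.ofReal_ofNat 2, ← ENNReal.ofReal_mul (by positivity),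
          ← ENNReal.ofReal_mul zero_le_two, ← ENNReal.ofReal_mul (by positivity),
          ← ENNReal.ofReal_add (by positivity) (by positivity),
          ← ENNReal.ofReal_mul (by positivity), ← hexp]
        congr 1
        ring
    _ ≤ ENNReal.ofReal (2 * C₁ * (36 + 2 * C₂) * (1 + Real.log L) * L ^ (-(β / 2))) := by
        refine ENNReal.ofReal_le_ofReal ?_
        have : 0 ≤ C₁ * L ^ (-(β / 2)) * (C₂ * Real.log L) := by positivity
        nlinarith

/-- Pure high-high (Q-Q) contribution: for `3/2 < β ≤ 2` and `Λ ≥ 2`,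
`∑_{k ≠ 0} (1+|k|²)^{-β/2} ∑_{h(p) > Λ², h(p+k) > Λ²} ((1+|p|²)(1+|p+k|²))^{-1}
  ≤ C (1+log Λ) Λ^{-β}`. -/
theorem bessel_QQ_tail_double_sum (β : ℝ) (hβ1 : 3 / 2 < β) (hβ2 : β ≤ 2) :
    ∃ C : ℝ, 0 < C ∧ ∀ Λ : ℝ, 2 ≤ Λ →
      ∑' k : {k : ℤ × ℤ // k ≠ 0},
        ENNReal.ofReal ((1 + nsq k.1) ^ (-(β / 2))) *
          ∑' p : {p : ℤ × ℤ // Λ ^ 2 < 1 + nsq p ∧ Λ ^ 2 < 1 + nsq (p + k.1)},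
            ENNReal.ofReal (1 / ((1 + nsq p.1) * (1 + nsq (p.1 + k.1)))) ≤
      ENNReal.ofReal (C * (1 + Real.log Λ) * Λ ^ (-β)) := by
  obtain ⟨C, hC, hbound⟩ := tsum_weight_mul_high_high_le_log (by linarith : 1 < β) hβ2
  refine ⟨2 * C, by positivity, fun Λ hΛ =>
    (hbound (Λ ^ 2) (by nlinarith)).trans (ENNReal.ofReal_le_ofReal ?_)⟩
  have hΛ0 : 0 < Λ := by linarith
  have hlog : 0 ≤ Real.log Λ := Real.log_nonneg (by linarith)
  have hpow : (Λ ^ 2) ^ (-(β / 2)) = Λ ^ (-β) := by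
    rw [← Real.rpow_natCast_mul hΛ0.le]; congr 1; push_cast; ring
  rw [Real.log_pow, hpow]
  have : 0 ≤ C * Λ ^ (-β) := by positivity
  push_cast
  nlinarith
end
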